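/- Let g₉ have (1,0)-basis ω¹,ω²,ω³ with dω¹ = −ω³∧ω̄³, dω² = (i/2)ω¹∧ω² + (1/2)ω¹∧ω̄³ − (i/2)ω²∧ω̄¹, dω³ = −(i/2)ω¹∧ω³ + (i/2)ω³∧ω̄¹. Then for any Hermitian form 2F = i(r²ω¹∧ω̄¹ + s²ω²∧ω̄² + t²ω³∧ω̄³) + u ω¹∧ω̄² − ū ω²∧ω̄¹ + v ω²∧ω̄³ − v̄ ω³∧ω̄² + z ω¹∧ω̄³ − z̄ ω³∧ω̄¹ with r²s² > |u|², the (3,2)-form 4∂F² has component 2(|u|² − r²s²) ≠ 0 on ω¹²³∧ω̄²∧ω̄³; moreover ∂̄(Λ^{3,1}) is spanned by ω¹²³∧ω̄¹∧ω̄² and ω¹²³∧ω̄¹∧ω̄³, hence ∂F² ∉ ∂̄(Λ^{3,1}). Consequently g₉ admits neither balanced nor strongly Gauduchon metrics. -/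

import Mathlib

/-!
Taking the coefficient of `ω¹²³∧ω̄²∧ω̄³` (a `5 × 5` minor) is a linear functional on forms. It
vanishes on `∂̄(Λ^{3,1})`, which the Leibniz rule shows to be spanned by `ω¹²³∧ω̄¹∧ω̄²` and
`ω¹²³∧ω̄¹∧ω̄³`, whereas expanding `∂(F²)` by the Leibniz rule shows its value on `∂F²` to be
`(|u|² − r²s²)/2`, which is nonzero because `F` is positive definite.
-/

noncomputable section

/-- The space of invariant complex forms: the exterior algebra over the span of
`ω¹, ω², ω³, ω̄¹, ω̄², ω̄³` (indexed `0,…,5`). -/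
abbrev Lambda : Type := ExteriorAlgebra ℂ (Fin 6 → ℂ)

/-- The generators `ω¹, ω², ω³, ω̄¹, ω̄², ω̄³` as degree-one elements. -/
def w (i : Fin 6) : Lambda := ExteriorAlgebra.ι ℂ (Pi.single i 1)

/-- Antiderivation property (Leibniz rule against `1`-forms): the defining extension
property of (the bigraded pieces of) the Chevalley–Eilenberg differential. -/
def IsAntideriv (D : Lambda →ₗ[ℂ] Lambda) : Prop :=
  D 1 = 0 ∧ ∀ (v : Fin 6 → ℂ) (x : Lambda),
    D (ExteriorAlgebra.ι ℂ v * x) =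
      D (ExteriorAlgebra.ι ℂ v) * x - ExteriorAlgebra.ι ℂ v * D x

/-- The generic Hermitian form
`2F = i(r²ω¹∧ω̄¹ + s²ω²∧ω̄² + t²ω³∧ω̄³) + uω¹∧ω̄² − ūω²∧ω̄¹ + vω²∧ω̄³ − v̄ω³∧ω̄²
  + zω¹∧ω̄³ − z̄ω³∧ω̄¹`. -/
def Fherm (r s t : ℝ) (u v z : ℂ) : Lambda :=
  (1 / 2 : ℂ) •
    (Complex.I • ((r : ℂ) ^ 2 • (w 0 * w 3) + (s : ℂ) ^ 2 • (w 1 * w 4) +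
        (t : ℂ) ^ 2 • (w 2 * w 5)) +
      u • (w 0 * w 4) - (starRingEnd ℂ) u • (w 1 * w 3) +
      v • (w 1 * w 5) - (starRingEnd ℂ) v • (w 2 * w 4) +
      z • (w 0 * w 5) - (starRingEnd ℂ) z • (w 2 * w 3))

/-- Positivity constraints making `Fherm r s t u v z` a Hermitian metric. -/
def HermPos (r s t : ℝ) (u v z : ℂ) : Prop :=
  r ≠ 0 ∧ s ≠ 0 ∧ t ≠ 0 ∧
  r ^ 2 * s ^ 2 > Complex.normSq u ∧ s ^ 2 * t ^ 2 > Complex.normSq v ∧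
  r ^ 2 * t ^ 2 > Complex.normSq z ∧
  r ^ 2 * s ^ 2 * t ^ 2 +
      2 * (Complex.I * (starRingEnd ℂ) u * (starRingEnd ℂ) v * z).re >
    t ^ 2 * Complex.normSq u + r ^ 2 * Complex.normSq v + s ^ 2 * Complex.normSq z

namespace ExteriorAlgebra

variable {R ι : Type*} [CommRing R]

/-- The coefficient of `ι (e (σ 0)) * ⋯ * ι (e (σ (k-1)))`, for `e` the standard basis of `ι → R`:
the `k × k` minor on the columns `σ` in degree `k`, and `0` in other degrees. -/
def monomialCoeff {k : ℕ} (σ : Fin k → ι) : ExteriorAlgebra R (ι → R) →ₗ[R] R :=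
  liftAlternating fun i => if h : k = i then
    (Matrix.detRowAlternating.compLinearMap (LinearMap.funLeft R R σ)).domDomCongr (finCongr h)
  else 0

theorem monomialCoeff_ιMulti {k : ℕ} (σ : Fin k → ι) (f : Fin k → ι → R) :
    monomialCoeff σ (ιMulti R k f) = (Matrix.of fun i j => f i (σ j)).det := by
  simp [monomialCoeff, liftAlternating_apply_ιMulti]
  rfl

variable [DecidableEq ι]

theorem monomialCoeff_ιMulti_single_self {k : ℕ} {σ : Fin k → ι} (hσ : σ.Injective) :
    monomialCoeff σ (ιMulti R k fun i => Pi.single (σ i) 1) = 1 := by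
  rw [monomialCoeff_ιMulti, ← Matrix.det_one (n := Fin k) (R := R)]
  congr 1
  ext i j
  simp [Pi.single_apply, Matrix.one_apply, hσ.eq_iff, eq_comm]

theorem monomialCoeff_ιMulti_single_of_notMem_range {k : ℕ} (σ τ : Fin k → ι) {i : Fin k}
    (hi : τ i ∉ Set.range σ) :
    monomialCoeff σ (ιMulti R k fun i => Pi.single (τ i) 1) = 0 := by
  rw [monomialCoeff_ιMulti]
  refine Matrix.det_eq_zero_of_row_eq_zero i fun j => ?_
  simp only [Matrix.of_apply, Pi.single_apply]
  exact if_neg fun h => hi ⟨j, h⟩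

end ExteriorAlgebra

open ExteriorAlgebra

theorem w_mul_five (a b c d e : Fin 6) :
    w a * w b * w c * w d * w e = ιMulti ℂ 5 fun i => Pi.single (![a, b, c, d, e] i) 1 := by
  simp [ιMulti_apply, w, mul_assoc, Matrix.vecTail]

theorem monomialCoeff_w_mul_five_self {a b c d e : Fin 6} (h : (![a, b, c, d, e]).Injective) :
    monomialCoeff ![a, b, c, d, e] (w a * w b * w c * w d * w e) = 1 := by
  rw [w_mul_five]
  exact monomialCoeff_ιMulti_single_self h

theorem monomialCoeff_w_mul_five_of_notMem_range (σ : Fin 5 → Fin 6) {a b c d e : Fin 6}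
    (i : Fin 5) (hi : ![a, b, c, d, e] i ∉ Set.range σ) :
    monomialCoeff σ (w a * w b * w c * w d * w e) = 0 := by
  rw [w_mul_five]
  exact monomialCoeff_ιMulti_single_of_notMem_range σ _ hi

theorem w_mul_self (i : Fin 6) : w i * w i = 0 := ι_sq_zero _

theorem w_mul_w_mul_self (i : Fin 6) (x : Lambda) : w i * (w i * x) = 0 := by
  rw [← mul_assoc, w_mul_self, zero_mul]

theorem w_mul_w_of_lt {i j : Fin 6} (_ : i < j) : w j * w i = -(w i * w j) :=
  eq_neg_of_add_eq_zero_left (ι_add_mul_swap _ _)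

theorem w_mul_w_mul_of_lt {i j : Fin 6} (h : i < j) (x : Lambda) :
    w j * (w i * x) = -(w i * (w j * x)) := by
  rw [← mul_assoc, w_mul_w_of_lt h, ← mul_assoc, neg_mul]

theorem IsAntideriv.map_w_mul {D : Lambda →ₗ[ℂ] Lambda} (hD : IsAntideriv D) (i : Fin 6)
    (x : Lambda) : D (w i * x) = D (w i) * x - w i * D x :=
  hD.2 _ _

structure IsDelG9 (D : Lambda →ₗ[ℂ] Lambda) : Prop where
  isAntideriv : IsAntideriv D
  map_w0 : D (w 0) = 0
  map_w1 : D (w 1) = (Complex.I / 2) • (w 0 * w 1)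
  map_w2 : D (w 2) = (-(Complex.I / 2)) • (w 0 * w 2)
  map_w3 : D (w 3) = w 2 * w 5
  map_w4 : D (w 4) = (1 / 2 : ℂ) • (w 3 * w 2) + (Complex.I / 2) • (w 4 * w 0)
  map_w5 : D (w 5) = (-(Complex.I / 2)) • (w 5 * w 0)

structure IsDelbarG9 (D : Lambda →ₗ[ℂ] Lambda) : Prop where
  isAntideriv : IsAntideriv D
  map_w0 : D (w 0) = -(w 2 * w 5)
  map_w1 : D (w 1) = (1 / 2 : ℂ) • (w 0 * w 5) + (-(Complex.I / 2)) • (w 1 * w 3)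
  map_w2 : D (w 2) = (Complex.I / 2) • (w 2 * w 3)
  map_w3 : D (w 3) = 0
  map_w4 : D (w 4) = (-(Complex.I / 2)) • (w 3 * w 4)
  map_w5 : D (w 5) = (Complex.I / 2) • (w 3 * w 5)

theorem IsDelbarG9.map_w012_mul_w3 {D : Lambda →ₗ[ℂ] Lambda} (hD : IsDelbarG9 D) :
    D (w 0 * w 1 * w 2 * w 3) = 0 := by
  simp +decide only [mul_assoc, hD.isAntideriv.map_w_mul, hD.map_w0, hD.map_w1, hD.map_w2,
    hD.map_w3, add_mul, smul_mul_assoc, neg_mul, mul_smul_comm, mul_neg, w_mul_w_of_lt,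
    w_mul_w_mul_of_lt, w_mul_self, w_mul_w_mul_self, smul_zero, neg_zero, sub_zero, add_zero,
    mul_zero]

theorem IsDelbarG9.map_w012_mul_w4 {D : Lambda →ₗ[ℂ] Lambda} (hD : IsDelbarG9 D) :
    D (w 0 * w 1 * w 2 * w 4) = (Complex.I / 2) • (w 0 * w 1 * w 2 * w 3 * w 4) := by
  simp +decide only [mul_assoc, hD.isAntideriv.map_w_mul, hD.map_w0, hD.map_w1, hD.map_w2,
    hD.map_w4, add_mul, smul_mul_assoc, neg_mul, mul_add, mul_sub, mul_smul_comm, mul_neg,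
    w_mul_w_of_lt, w_mul_w_mul_of_lt, w_mul_w_mul_self, smul_zero, neg_zero, zero_sub, zero_add,
    mul_zero]
  module

theorem IsDelbarG9.map_w012_mul_w5 {D : Lambda →ₗ[ℂ] Lambda} (hD : IsDelbarG9 D) :
    D (w 0 * w 1 * w 2 * w 5) = (-(Complex.I / 2)) • (w 0 * w 1 * w 2 * w 3 * w 5) := by
  simp +decide only [mul_assoc, hD.isAntideriv.map_w_mul, hD.map_w0, hD.map_w1, hD.map_w2,
    hD.map_w5, add_mul, smul_mul_assoc, neg_mul, mul_sub, mul_smul_comm, mul_neg,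
    w_mul_w_mul_of_lt, w_mul_self, smul_zero, neg_zero, zero_sub, zero_add, mul_zero]
  module

theorem IsDelbarG9.map_span_w012_mul {D : Lambda →ₗ[ℂ] Lambda} (hD : IsDelbarG9 D) :
    Submodule.map D (Submodule.span ℂ
        {w 0 * w 1 * w 2 * w 3, w 0 * w 1 * w 2 * w 4, w 0 * w 1 * w 2 * w 5}) =
      Submodule.span ℂ {w 0 * w 1 * w 2 * w 3 * w 4, w 0 * w 1 * w 2 * w 3 * w 5} := by
  have hI : IsUnit (Complex.I / 2) := Ne.isUnit (by simp)
  rw [Submodule.map_span, Set.image_insert_eq, Set.image_insert_eq, Set.image_singleton,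
    hD.map_w012_mul_w3, hD.map_w012_mul_w4, hD.map_w012_mul_w5, Submodule.span_insert_zero,
    Submodule.span_insert, Submodule.span_insert, Submodule.span_singleton_smul_eq hI,
    Submodule.span_singleton_smul_eq hI.neg]

theorem IsDelG9.four_smul_map_Fherm_sq {D : Lambda →ₗ[ℂ] Lambda} (hD : IsDelG9 D)
    (r s t : ℝ) (u v z : ℂ) :
    (4 : ℂ) • D (Fherm r s t u v z * Fherm r s t u v z) =
      (Complex.I * (starRingEnd ℂ) u * (starRingEnd ℂ) v - (s : ℂ) ^ 2 * (starRingEnd ℂ) z) •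
          (w 0 * w 1 * w 2 * w 3 * w 4) +
        (-(Complex.I * (s : ℂ) ^ 2 * z) - Complex.I * v * (starRingEnd ℂ) z -
            (t : ℂ) ^ 2 * (starRingEnd ℂ) u + u * v) • (w 0 * w 1 * w 2 * w 3 * w 5) +
        (2 * ((Complex.normSq u : ℂ) - (r : ℂ) ^ 2 * (s : ℂ) ^ 2)) •
          (w 0 * w 1 * w 2 * w 4 * w 5) := by
  rw [Fherm]
  simp +decide only [smul_mul_assoc, mul_smul_comm, smul_smul, smul_add, smul_sub, mul_add,
    add_mul, mul_sub, sub_mul, mul_assoc, map_add, map_sub, map_smul, map_neg,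
    hD.isAntideriv.map_w_mul, hD.map_w0, hD.map_w1, hD.map_w2, hD.map_w3, hD.map_w4, hD.map_w5,
    w_mul_w_mul_of_lt, w_mul_w_of_lt, w_mul_self, w_mul_w_mul_self, mul_zero, zero_mul,
    smul_zero, mul_neg, neg_mul, smul_neg, neg_neg, sub_zero, zero_sub, add_zero,
    zero_add, sub_self, neg_zero]
  match_scalars
  · linear_combination 2 * (r : ℂ) ^ 2 * (s : ℂ) ^ 2 * Complex.I_sq + 2 * Complex.mul_conj u
  · linear_combination (t : ℂ) ^ 2 * (starRingEnd ℂ) u * Complex.I_sq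
  · linear_combination (s : ℂ) ^ 2 * (starRingEnd ℂ) z * Complex.I_sq

theorem HermPos.normSq_sub_ne_zero {r s t : ℝ} {u v z : ℂ} (hF : HermPos r s t u v z) :
    (Complex.normSq u : ℂ) - (r : ℂ) ^ 2 * (s : ℂ) ^ 2 ≠ 0 := by
  exact_mod_cast (sub_neg.2 hF.2.2.2.1).ne

theorem IsDelG9.monomialCoeff_map_Fherm_sq {D : Lambda →ₗ[ℂ] Lambda} (hD : IsDelG9 D)
    (r s t : ℝ) (u v z : ℂ) :
    monomialCoeff ![0, 1, 2, 4, 5] (D (Fherm r s t u v z * Fherm r s t u v z)) =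
      ((Complex.normSq u : ℂ) - (r : ℂ) ^ 2 * (s : ℂ) ^ 2) / 2 := by
  have h := congrArg (monomialCoeff ![0, 1, 2, 4, 5]) (hD.four_smul_map_Fherm_sq r s t u v z)
  rw [map_add, map_add, map_smul, map_smul, map_smul, map_smul,
    monomialCoeff_w_mul_five_of_notMem_range _ 3 (by decide),
    monomialCoeff_w_mul_five_of_notMem_range _ 3 (by decide),
    monomialCoeff_w_mul_five_self (by decide)] at h
  simp only [smul_eq_mul, mul_zero, mul_one, zero_add] at h
  linear_combination h / 4

/-- on `(g₉, J)` (`dω¹ = −ω³∧ω̄³`,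
`dω² = (i/2)ω¹∧ω² + (1/2)ω¹∧ω̄³ − (i/2)ω²∧ω̄¹`,
`dω³ = −(i/2)ω¹∧ω³ + (i/2)ω³∧ω̄¹`): the component of `4∂F²` on `ω¹²³∧ω̄²∧ω̄³` is
`2(|u|²−r²s²) ≠ 0`, `∂̄(Λ^{3,1})` is spanned by `ω¹²³∧ω̄¹∧ω̄²` and `ω¹²³∧ω̄¹∧ω̄³`,
and `∂F² ∉ ∂̄(Λ^{3,1})`, `∂F² ≠ 0`: no balanced and no sG metric. -/
theorem stmt14
    (Dp Db : Lambda →ₗ[ℂ] Lambda) (hDp : IsAntideriv Dp) (hDb : IsAntideriv Db)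
    (hp0 : Dp (w 0) = 0)
    (hp1 : Dp (w 1) = (Complex.I / 2) • (w 0 * w 1))
    (hp2 : Dp (w 2) = (-(Complex.I / 2)) • (w 0 * w 2))
    (hp3 : Dp (w 3) = w 2 * w 5)
    (hp4 : Dp (w 4) = (1 / 2 : ℂ) • (w 3 * w 2) + (Complex.I / 2) • (w 4 * w 0))
    (hp5 : Dp (w 5) = (-(Complex.I / 2)) • (w 5 * w 0))
    (hb0 : Db (w 0) = -(w 2 * w 5))
    (hb1 : Db (w 1) = (1 / 2 : ℂ) • (w 0 * w 5) + (-(Complex.I / 2)) • (w 1 * w 3))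
    (hb2 : Db (w 2) = (Complex.I / 2) • (w 2 * w 3))
    (hb3 : Db (w 3) = 0)
    (hb4 : Db (w 4) = (-(Complex.I / 2)) • (w 3 * w 4))
    (hb5 : Db (w 5) = (Complex.I / 2) • (w 3 * w 5))
    (r s t : ℝ) (u v z : ℂ) (hF : HermPos r s t u v z) :
    (∃ c₁ c₂ : ℂ,
      (4 : ℂ) • Dp (Fherm r s t u v z * Fherm r s t u v z) =
        c₁ • (w 0 * w 1 * w 2 * w 3 * w 4) + c₂ • (w 0 * w 1 * w 2 * w 3 * w 5) +
          (2 * ((Complex.normSq u : ℂ) - (r : ℂ) ^ 2 * (s : ℂ) ^ 2)) •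
            (w 0 * w 1 * w 2 * w 4 * w 5)) ∧
    2 * ((Complex.normSq u : ℂ) - (r : ℂ) ^ 2 * (s : ℂ) ^ 2) ≠ 0 ∧
    Submodule.map Db (Submodule.span ℂ
        {w 0 * w 1 * w 2 * w 3, w 0 * w 1 * w 2 * w 4, w 0 * w 1 * w 2 * w 5}) =
      Submodule.span ℂ {w 0 * w 1 * w 2 * w 3 * w 4, w 0 * w 1 * w 2 * w 3 * w 5} ∧
    Dp (Fherm r s t u v z * Fherm r s t u v z) ∉
      Submodule.map Db (Submodule.span ℂ
        {w 0 * w 1 * w 2 * w 3, w 0 * w 1 * w 2 * w 4, w 0 * w 1 * w 2 * w 5}) ∧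
    Dp (Fherm r s t u v z * Fherm r s t u v z) ≠ 0 := by
  have hDel : IsDelG9 Dp := ⟨hDp, hp0, hp1, hp2, hp3, hp4, hp5⟩
  have hDelbar : IsDelbarG9 Db := ⟨hDb, hb0, hb1, hb2, hb3, hb4, hb5⟩
  set coeff : Lambda →ₗ[ℂ] ℂ := monomialCoeff ![0, 1, 2, 4, 5]
  have hcoeff : coeff (Dp (Fherm r s t u v z * Fherm r s t u v z)) ≠ 0 := by
    rw [hDel.monomialCoeff_map_Fherm_sq]
    exact div_ne_zero hF.normSq_sub_ne_zero two_ne_zero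
  have hker : Submodule.span ℂ {w 0 * w 1 * w 2 * w 3 * w 4, w 0 * w 1 * w 2 * w 3 * w 5} ≤
      LinearMap.ker coeff := by
    rw [Submodule.span_le, Set.insert_subset_iff, Set.singleton_subset_iff]
    exact ⟨monomialCoeff_w_mul_five_of_notMem_range _ 3 (by decide),
      monomialCoeff_w_mul_five_of_notMem_range _ 3 (by decide)⟩
  rw [hDelbar.map_span_w012_mul]
  exact ⟨⟨_, _, hDel.four_smul_map_Fherm_sq r s t u v z⟩,
    mul_ne_zero two_ne_zero hF.normSq_sub_ne_zero, rfl, fun hmem => hcoeff (hker hmem),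
    fun h0 => hcoeff (by rw [h0, map_zero])⟩
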